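/- Let G be a finite simple graph on vertices {x_1,...,x_n} with cover ideal J = J(G) ⊆ R = k[x_1,...,x_n]. Then: (a) for every edge {x_i, x_j} of G, the prime (x_i, x_j) belongs to Ass(R/J^3); and (b) for every odd r and every subset {x_{i_1},...,x_{i_r}} of the vertices whose induced subgraph in G is an odd cycle, the prime (x_{i_1},...,x_{i_r}) belongs to Ass(R/J^3). -/

import Mathlib

open SimpleGraph MvPolynomial

/-- The chromatic number of a graph, as a natural number: the least `m` such
that `G` has a proper `m`-coloring. -/
noncomputable def chromNum {V : Type*} (G : SimpleGraph V) : ℕ :=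
  sInf {m | G.Colorable m}

/-- `G` is critically `s`-chromatic: `χ(G) = s` and deleting any vertex drops
the chromatic number to `s - 1`. -/
def CriticallyChromatic {V : Type*} (G : SimpleGraph V) (s : ℕ) : Prop :=
  chromNum G = s ∧ ∀ v : V, chromNum (G.induce {v}ᶜ) = s - 1

/-- The expansion `G[W]` of a graph `G` at a set of vertices `W`: each vertex
`w ∈ W` is replaced by two adjacent copies (`Sum.inl w` and `Sum.inr w`), each
adjacent to (both copies of) the neighbors of `w`. -/
def expansion {V : Type*} (G : SimpleGraph V) (W : Set V) : SimpleGraph (V ⊕ W) :=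
  SimpleGraph.fromRel (fun a b =>
    match a, b with
    | Sum.inl u, Sum.inl v => G.Adj u v
    | Sum.inl u, Sum.inr w => G.Adj u (w : V) ∨ u = (w : V)
    | Sum.inr _, Sum.inl _ => False
    | Sum.inr w, Sum.inr w' => G.Adj (w : V) (w' : V))

/-- The `s`-th expansion `G^s` of `G`: every vertex is replaced by a clique of
size `s` (its shadows), and shadows of adjacent vertices are adjacent. -/
def nExpansion {V : Type*} (G : SimpleGraph V) (s : ℕ) : SimpleGraph (V × Fin s) :=
  SimpleGraph.fromRel (fun a b => G.Adj a.1 b.1 ∨ a.1 = b.1)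

/-- `W` is an independent set of `G`. -/
def IsIndepSet {V : Type*} (G : SimpleGraph V) (W : Set V) : Prop :=
  ∀ ⦃u v⦄, u ∈ W → v ∈ W → ¬ G.Adj u v

/-- `W` is a maximal independent set of `G`. -/
def IsMaxIndepSet {V : Type*} (G : SimpleGraph V) (W : Set V) : Prop :=
  _root_.IsIndepSet G W ∧ ∀ W', _root_.IsIndepSet G W' → W ⊆ W' → W = W'

/-- `W` is a vertex cover of `G`. -/
def IsVertexCover {V : Type*} (G : SimpleGraph V) (W : Set V) : Prop :=
  ∀ ⦃u v⦄, G.Adj u v → u ∈ W ∨ v ∈ W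

/-- `W` is a minimal vertex cover of `G`. -/
def IsMinVertexCover {V : Type*} (G : SimpleGraph V) (W : Set V) : Prop :=
  _root_.IsVertexCover G W ∧ ∀ W' ⊆ W, _root_.IsVertexCover G W' → W' = W

/-- `G` has a `b`-fold coloring using (at most) `d` colors: each vertex gets a
set of `b` colors, adjacent vertices getting disjoint sets. -/
def FoldColorable {V : Type*} (G : SimpleGraph V) (b d : ℕ) : Prop :=
  ∃ f : V → Finset (Fin d), (∀ v, (f v).card = b) ∧
    ∀ ⦃u v⦄, G.Adj u v → Disjoint (f u) (f v)

/-- The `b`-fold chromatic number `χ_b(G)`. -/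
noncomputable def foldChromNum {V : Type*} (G : SimpleGraph V) (b : ℕ) : ℕ :=
  sInf {d | FoldColorable G b d}

/-- The fractional chromatic number `χ_f(G) = inf_b χ_b(G)/b`. -/
noncomputable def fracChromNum {V : Type*} (G : SimpleGraph V) : ℝ :=
  ⨅ b : ℕ+, (foldChromNum G b : ℝ) / (b : ℝ)

/-- The cover ideal `J(G) = ⋂_{{i,j} ∈ E(G)} (x_i, x_j)` of a graph `G` on
`{x_1, …, x_n}`, inside `k[x_1, …, x_n]`. -/
noncomputable def coverIdeal (k : Type*) [Field k] {n : ℕ} (G : SimpleGraph (Fin n)) :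
    Ideal (MvPolynomial (Fin n) k) :=
  ⨅ (i : Fin n) (j : Fin n) (_ : G.Adj i j),
    Ideal.span {MvPolynomial.X i, MvPolynomial.X j}

/-!
Let `P_S` be the prime generated by the variables of a vertex set `S`, and let
`T = x^t · (∏_{i ∉ S} x_i)^3` with `t` a multiset supported on `S`.
Then `J³ : T = P_S` as soon as
(i) for each `s ∈ S`, `x_s · x^t` is a product of three monomials `x^C` of vertex covers `C` of
`G[S]` (the variables outside `S` complete them to vertex covers of `G`), and
(ii) every vertex cover of `G` meets `S` in at least `c` vertices while `|t| < 3c`: by (ii) every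
monomial of an element of `J³` has degree `≥ 3c` in the variables of `S`, so `r T ∈ J³` forces
every monomial of `r` to involve a variable of `S`.

For an edge `{i, j}` take `t = {i, j}` and `c = 1`. For an odd cycle `ℤ/(2l+1)` take `c = l + 1`
and `t = S + E` with `E` the even vertices, a cover of size `l + 1`; then
`x_q · x^S · x^E = x^(q+E) · x^(q-E) · x^E`, and `q + E`, `q - E` are covers, being images of
`E` under automorphisms of the cycle.
-/

open Finset

namespace MvPolynomial

variable {σ R : Type*} [CommRing R]

/-- Polynomials all of whose monomials have degree at least `d` in the variables indexed by `S`. -/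
def degreeOnGE (S : Finset σ) (d : ℕ) : Ideal (MvPolynomial σ R) where
  carrier := {f | ∀ m ∈ f.support, d ≤ ∑ s ∈ S, m s}
  add_mem' {f g} hf hg m hm := by
    classical
    rcases Finset.mem_union.1 (support_add hm) with h | h
    exacts [hf m h, hg m h]
  zero_mem' := by simp
  smul_mem' f g hg m hm := by
    classical
    obtain ⟨a, -, b, hb, rfl⟩ := Finset.mem_add.1 (support_mul f g hm)
    exact (hg b hb).trans (Finset.sum_le_sum fun s _ => by simp)

variable {S : Finset σ} {d : ℕ}

theorem mul_mem_degreeOnGE {f g : MvPolynomial σ R} {a b : ℕ} (hf : f ∈ degreeOnGE S a)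
    (hg : g ∈ degreeOnGE S b) : f * g ∈ degreeOnGE S (a + b) := by
  classical
  intro m hm
  obtain ⟨mf, hmf, mg, hmg, rfl⟩ := Finset.mem_add.1 (support_mul f g hm)
  simpa [Finset.sum_add_distrib] using add_le_add (hf mf hmf) (hg mg hmg)

theorem pow_le_degreeOnGE {I : Ideal (MvPolynomial σ R)} (h : I ≤ degreeOnGE S d) (e : ℕ) :
    I ^ e ≤ degreeOnGE S (e * d) := by
  induction e with
  | zero => exact fun f _ m _ => by simp
  | succ e ih =>
    rw [pow_succ, Ideal.mul_le]
    intro f hf g hg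
    simpa [add_mul] using mul_mem_degreeOnGE (ih hf) (h hg)

theorem mem_span_X_image_of_mul_monomial_mem {r : MvPolynomial σ R} {a : σ →₀ ℕ}
    (hr : r * monomial a 1 ∈ degreeOnGE S d) (ha : ∑ s ∈ S, a s < d) :
    r ∈ Ideal.span (X '' (S : Set σ)) := by
  rw [mem_ideal_span_X_image]
  by_contra! h
  obtain ⟨m, hm, hmS⟩ := h
  have hsupp : m + a ∈ (r * monomial a 1).support := by
    rwa [mem_support_iff, coeff_mul_monomial, mul_one, ← mem_support_iff]
  have := hr _ hsupp
  simp only [Finsupp.add_apply, Finset.sum_add_distrib] at this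
  rw [Finset.sum_eq_zero fun s hs => hmS s hs] at this
  omega

theorem sub_aeval_mem_span_X_image (s : Set σ) [DecidablePred (· ∈ s)] (f : MvPolynomial σ R) :
    f - aeval (fun i => if i ∈ s then 0 else X i) f ∈ Ideal.span (X '' s) := by
  induction f using MvPolynomial.induction_on with
  | C a => simp
  | add p q hp hq => simpa [add_sub_add_comm] using Ideal.add_mem _ hp hq
  | mul_X p i hp =>
    by_cases hi : i ∈ s
    · simpa [hi] using Ideal.mul_mem_left _ p (Ideal.subset_span (Set.mem_image_of_mem X hi))
    · simpa [hi, sub_mul] using Ideal.mul_mem_right (X i) _ hp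

theorem isPrime_span_X_image [IsDomain R] (s : Set σ) :
    (Ideal.span (X '' s : Set (MvPolynomial σ R))).IsPrime := by
  classical
  set φ := aeval (R := R) fun i => if i ∈ s then 0 else (X i : MvPolynomial σ R)
  have hker : RingHom.ker φ = Ideal.span (X '' s) := by
    refine le_antisymm (fun f hf => ?_) (Ideal.span_le.2 ?_)
    · have := sub_aeval_mem_span_X_image (R := R) s f
      rwa [RingHom.mem_ker.1 hf, sub_zero] at this
    · rintro _ ⟨i, hi, rfl⟩
      simp [φ, hi]
  exact hker ▸ RingHom.ker_isPrime φ

theorem span_X_image_mem_associatedPrimes [IsDomain R] {I : Ideal (MvPolynomial σ R)}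
    {a : σ →₀ ℕ} (hI : I ≤ degreeOnGE S d) (ha : ∑ s ∈ S, a s < d)
    (hmem : ∀ s ∈ S, X s * monomial a 1 ∈ I) :
    Ideal.span (X '' (S : Set σ)) ∈
      associatedPrimes (MvPolynomial σ R) (MvPolynomial σ R ⧸ I) := by
  have hprime := isPrime_span_X_image (R := R) (S : Set σ)
  refine ⟨hprime, Ideal.Quotient.mk I (monomial a 1), ?_⟩
  rw [← hprime.radical]
  congr 1
  ext r
  rw [Submodule.mem_colon_singleton, Submodule.mem_bot]
  change r ∈ _ ↔ Ideal.Quotient.mk I (r * monomial a 1) = 0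
  rw [Ideal.Quotient.eq_zero_iff_mem]
  refine ⟨fun hr => ?_, fun hr => mem_span_X_image_of_mul_monomial_mem (hI hr) ha⟩
  suffices Ideal.span (X '' (S : Set σ)) ≤ I.colon {monomial a 1} by
    simpa [Submodule.mem_colon_singleton] using this hr
  rw [Ideal.span_le]
  rintro _ ⟨s, hs, rfl⟩
  simpa [Submodule.mem_colon_singleton] using hmem s hs

end MvPolynomial

namespace SimpleGraph

theorem IsVertexCover.image_union_compl_range {V W : Type*} {H : SimpleGraph V}
    {G : SimpleGraph W} (φ : H ↪g G) {C : Set V} (hC : H.IsVertexCover C) :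
    G.IsVertexCover (φ '' C ∪ (Set.range φ)ᶜ) := by
  intro x y hxy
  by_cases hx : x ∈ Set.range φ
  · by_cases hy : y ∈ Set.range φ
    · obtain ⟨u, rfl⟩ := hx
      obtain ⟨w, rfl⟩ := hy
      rcases hC (φ.map_adj_iff.1 hxy) with h | h
      exacts [Or.inl (Or.inl ⟨u, h, rfl⟩), Or.inr (Or.inl ⟨w, h, rfl⟩)]
    · exact Or.inr (Or.inr hy)
  · exact Or.inl (Or.inr hx)

def Embedding.ofAdj {V : Type*} {G : SimpleGraph V} {i j : V} (h : G.Adj i j) :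
    (⊤ : SimpleGraph (Fin 2)) ↪g G where
  toFun := ![i, j]
  inj' a b := by fin_cases a <;> fin_cases b <;> simp [h.ne, h.ne']
  map_rel_iff' {a b} := by
    change G.Adj (![i, j] a) (![i, j] b) ↔ _
    fin_cases a <;> fin_cases b <;> simp [h, h.symm]

theorem Embedding.range_ofAdj {V : Type*} {G : SimpleGraph V} {i j : V} (h : G.Adj i j) :
    Set.range (Embedding.ofAdj h) = {i, j} := by
  change Set.range ![i, j] = _
  simp [Matrix.range_cons, Set.pair_comm]

section OddCycle

variable {r : ℕ} [NeZero r]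

theorem cycleGraph_adj_sub_right {a b : Fin r} (q : Fin r) :
    (cycleGraph r).Adj (a - q) (b - q) ↔ (cycleGraph r).Adj a b := by
  simp [cycleGraph_adj', sub_sub_sub_cancel_right]

theorem cycleGraph_adj_sub_left {a b : Fin r} (q : Fin r) :
    (cycleGraph r).Adj (q - a) (q - b) ↔ (cycleGraph r).Adj a b := by
  simp [cycleGraph_adj', sub_sub_sub_cancel_left, or_comm]

theorem even_val_or_even_val_of_cycleGraph_adj (hr : Odd r) {a b : Fin r}
    (h : (cycleGraph r).Adj a b) : Even a.val ∨ Even b.val := by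
  have key : ∀ a b : Fin r, (b - a).val = 1 → Even a.val ∨ Even b.val := by
    intro a b h
    have hb : b.val = (a.val + 1) % r := by rw [← h, ← Fin.val_add, add_sub_cancel _ b]
    rcases Nat.lt_or_ge (a.val + 1) r with hlt | hge
    · rw [Nat.mod_eq_of_lt hlt] at hb
      rw [hb, Nat.even_add_one]
      exact em _
    · obtain ⟨j, hj⟩ := hr
      have := a.isLt
      exact Or.inl (Nat.even_iff.2 (by omega))
  rcases cycleGraph_adj'.1 h with h | h
  exacts [(key b a h).symm, key a b h]

theorem even_val_sub_iff_not_even_val_sub (hr : Odd r) {p q : Fin r} (h : p ≠ q) :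
    Even (q - p).val ↔ ¬Even (p - q).val := by
  have hne : (p - q).val ≠ 0 := Fin.val_ne_zero_iff.2 (sub_ne_zero.2 h)
  have hneg : (q - p).val = r - (p - q).val := by
    rw [← neg_sub, Fin.val_neg', Nat.mod_eq_of_lt (by omega)]
  obtain ⟨j, hj⟩ := hr
  have := (p - q).isLt
  rw [hneg, Nat.even_iff, Nat.even_iff]
  omega

theorem val_filter_even_sub_add_val_filter_even_rev_sub (hr : Odd r) (q : Fin r) :
    (univ.filter fun p => Even (p - q).val).val + (univ.filter fun p => Even (q - p).val).val =
      q ::ₘ univ.val := by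
  ext p
  by_cases hpq : p = q
  · subst hpq
    simp [Multiset.count_univ]
  · simp only [filter_val, Multiset.count_add, Multiset.count_filter, Multiset.count_univ,
      Multiset.count_cons_of_ne hpq, even_val_sub_iff_not_even_val_sub hr hpq]
    split_ifs <;> omega

end OddCycle

theorem card_filter_even_val_le (l : ℕ) :
    #(univ.filter fun p : Fin (2 * l + 1) => Even p.val) ≤ l + 1 := by
  calc _ ≤ #(range (l + 1)) := card_le_card_of_injOn (fun p => p.val / 2)
        (fun p hp => by
          have := p.isLt
          simp only [coe_filter, mem_univ, true_and, Set.mem_ofPred_eq, Nat.even_iff] at hp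
          simp only [coe_range, Set.mem_Iio]
          omega)
        (fun p hp q hq hpq => by
          simp only [coe_filter, mem_univ, true_and, Set.mem_ofPred_eq, Nat.even_iff] at hp hq hpq
          exact Fin.ext (by omega))
    _ = l + 1 := card_range _

theorem le_card_of_isVertexCover_cycleGraph {l : ℕ} (hl : 1 ≤ l) {C : Finset (Fin (2 * l + 1))}
    (hC : (cycleGraph (2 * l + 1)).IsVertexCover ↑C) : l + 1 ≤ #C := by
  have hadj (p : Fin (2 * l + 1)) : (cycleGraph (2 * l + 1)).Adj p (p + 1) :=
    cycleGraph_adj'.2 (Or.inr (by simp [Nat.mod_eq_of_lt (by omega : 1 < 2 * l + 1)]))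
  have huniv : univ ⊆ C ∪ C.image (· - 1) := fun p _ => by
    rcases hC (hadj p) with h | h
    · exact mem_union_left _ h
    · exact mem_union_right _ (mem_image.2 ⟨p + 1, h, add_sub_cancel_right p 1⟩)
  have hcard := (card_le_card huniv).trans (card_union_le _ _)
  have himage : #(C.image (· - 1)) ≤ #C := card_image_le
  simp only [card_univ, Fintype.card_fin] at hcard
  omega

end SimpleGraph

section CoverIdeal

variable {k : Type*} [Field k] {n : ℕ} {G : SimpleGraph (Fin n)}

theorem mem_coverIdeal_iff {f : MvPolynomial (Fin n) k} :
    f ∈ coverIdeal k G ↔ ∀ m ∈ f.support, G.IsVertexCover (m.support : Set (Fin n)) := by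
  simp only [coverIdeal, Submodule.mem_iInf, ← Set.image_pair, mem_ideal_span_X_image,
    Set.mem_insert_iff, Set.mem_singleton_iff, exists_eq_or_imp, exists_eq_left,
    SimpleGraph.IsVertexCover, Finset.mem_coe, Finsupp.mem_support_iff]
  exact ⟨fun h m hm i j hij => h i j hij m hm, fun h i j hij m hm => h m hm hij⟩

theorem monomial_toFinsupp_mem_coverIdeal_iff (M : Multiset (Fin n)) :
    monomial (Multiset.toFinsupp M) (1 : k) ∈ coverIdeal k G ↔
      G.IsVertexCover {i | i ∈ M} := by
  classical
  simp only [mem_coverIdeal_iff, support_monomial, one_ne_zero, if_false,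
    Finset.mem_singleton, forall_eq, Multiset.toFinsupp_support]
  congr!
  ext
  simp

theorem coverIdeal_le_degreeOnGE {S : Finset (Fin n)} {c : ℕ}
    (h : ∀ W : Finset (Fin n), G.IsVertexCover ↑W → c ≤ #(S ∩ W)) :
    coverIdeal k G ≤ degreeOnGE S c := by
  intro f hf m hm
  calc c ≤ #(S ∩ m.support) := h _ (mem_coverIdeal_iff.1 hf m hm)
    _ ≤ ∑ s ∈ S ∩ m.support, m s := by
      simpa using card_nsmul_le_sum _ m 1 fun s hs =>
        Nat.one_le_iff_ne_zero.2 (Finsupp.mem_support_iff.1 (mem_inter.1 hs).2)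
    _ ≤ ∑ s ∈ S, m s := sum_le_sum_of_subset inter_subset_left

theorem span_X_range_mem_associatedPrimes_coverIdeal_pow {V : Type*} [Fintype V]
    {H : SimpleGraph V} (φ : H ↪g G) {m c : ℕ} (t : Multiset V) (ht : Multiset.card t < m * c)
    (hcover : ∀ C : Finset V, H.IsVertexCover ↑C → c ≤ #C)
    (hdecomp : ∀ v, ∃ C : Fin m → Finset V,
      (∀ i, H.IsVertexCover ↑(C i)) ∧ v ::ₘ t = ∑ i, (C i).val) :
    Ideal.span (X '' Set.range φ) ∈
      associatedPrimes (MvPolynomial (Fin n) k)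
        (MvPolynomial (Fin n) k ⧸ coverIdeal k G ^ m) := by
  classical
  set S := univ.map φ.toEmbedding
  have hS : (S : Set (Fin n)) = Set.range φ := by simp [S]
  set a := (t.map φ + m • Sᶜ.val).toFinsupp
  rw [← hS]
  refine span_X_image_mem_associatedPrimes (a := a)
    (pow_le_degreeOnGE (coverIdeal_le_degreeOnGE (c := c) fun W hW => ?_) m) ?_ fun s hs => ?_
  · calc c ≤ #(univ.filter (φ · ∈ W)) :=
          hcover _ (by convert hW.preimage φ using 1; ext; simp)
      _ = #((univ.filter (φ · ∈ W)).map φ.toEmbedding) := (card_map _).symm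
      _ ≤ #(S ∩ W) := card_le_card fun x hx => by
        obtain ⟨v, hv, rfl⟩ := mem_map.1 hx
        exact mem_inter.2 ⟨mem_map_of_mem _ (mem_univ v), (mem_filter.1 hv).2⟩
  · have hcount : ∀ s ∈ S, a s = (t.map φ).count s := fun s hs => by
      simp [a, Multiset.toFinsupp_apply, hs]
    rwa [sum_congr rfl hcount, Multiset.sum_count_eq_card (by simp [S]), Multiset.card_map]
  · obtain ⟨v, rfl⟩ : s ∈ Set.range φ := hS ▸ hs
    obtain ⟨C, hC, hvt⟩ := hdecomp v
    have hmap : (v ::ₘ t).map φ = ∑ i, (C i).val.map φ := by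
      rw [hvt]
      exact map_sum (Multiset.mapAddMonoidHom φ) _ _
    have hprod : X (φ v) * monomial a 1 =
        ∏ i, monomial ((C i).val.map φ + Sᶜ.val).toFinsupp (1 : k) := by
      rw [← monomial_sum_one, X, monomial_mul, one_mul, ← map_sum Multiset.toFinsupp,
        ← Multiset.toFinsupp_singleton, ← map_add, sum_add_distrib, sum_const, card_univ,
        Fintype.card_fin, ← hmap, Multiset.map_cons, Multiset.singleton_add, Multiset.cons_add]
    rw [hprod, ← Fin.prod_const]
    refine Ideal.prod_mem_prod fun i _ => (monomial_toFinsupp_mem_coverIdeal_iff _).2 ?_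
    convert (hC i).image_union_compl_range φ using 1
    ext x
    simp [S]

theorem span_X_pair_mem_associatedPrimes_coverIdeal_cube {i j : Fin n} (h : G.Adj i j) :
    Ideal.span {X i, X j} ∈
      associatedPrimes (MvPolynomial (Fin n) k)
        (MvPolynomial (Fin n) k ⧸ coverIdeal k G ^ 3) := by
  have hsingleton (v : Fin 2) :
      (⊤ : SimpleGraph (Fin 2)).IsVertexCover ↑({v} : Finset (Fin 2)) := by
    intro a b hab
    fin_cases a <;> fin_cases b <;> fin_cases v <;> simp_all
  have := span_X_range_mem_associatedPrimes_coverIdeal_pow (k := k) (Embedding.ofAdj h) (c := 1)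
    univ.val (by simp) (fun C hC => card_pos.2 ?_)
    fun v => ⟨![{v}, {v}, {v + 1}], fun x => by fin_cases x <;> exact hsingleton _, ?_⟩
  · simpa [Embedding.range_ofAdj, Set.image_pair] using this
  · rcases hC (show (⊤ : SimpleGraph (Fin 2)).Adj 0 1 by simp) with h | h
    exacts [⟨0, h⟩, ⟨1, h⟩]
  · fin_cases v <;> decide

theorem span_X_range_mem_associatedPrimes_coverIdeal_cube_of_oddCycle {l : ℕ} (hl : 1 ≤ l)
    (φ : cycleGraph (2 * l + 1) ↪g G) :
    Ideal.span (X '' Set.range φ) ∈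
      associatedPrimes (MvPolynomial (Fin n) k)
        (MvPolynomial (Fin n) k ⧸ coverIdeal k G ^ 3) := by
  have hodd : Odd (2 * l + 1) := odd_two_mul_add_one l
  set E := univ.filter fun p : Fin (2 * l + 1) => Even p.val
  have hE : (cycleGraph (2 * l + 1)).IsVertexCover ↑E := fun a b hab => by
    simpa [E] using even_val_or_even_val_of_cycleGraph_adj hodd hab
  refine span_X_range_mem_associatedPrimes_coverIdeal_pow φ (c := l + 1) (univ.val + E.val) ?_
    (fun C hC => le_card_of_isVertexCover_cycleGraph hl hC) fun q =>
      ⟨![univ.filter fun p => Even (p - q).val, univ.filter fun p => Even (q - p).val, E],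
        fun i => ?_, ?_⟩
  · have : #E ≤ l + 1 := card_filter_even_val_le l
    simp only [Multiset.card_add, card_val, card_univ, Fintype.card_fin]
    omega
  · fin_cases i
    · intro a b hab
      simpa using even_val_or_even_val_of_cycleGraph_adj hodd ((cycleGraph_adj_sub_right q).2 hab)
    · intro a b hab
      simpa using even_val_or_even_val_of_cycleGraph_adj hodd ((cycleGraph_adj_sub_left q).2 hab)
    · exact hE
  · rw [Fin.sum_univ_three, ← Multiset.cons_add,
      ← val_filter_even_sub_add_val_filter_even_rev_sub hodd q]
    rfl

end CoverIdeal

/-- (a) For every edge `{x_i, x_j}` of `G`, the prime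
`(x_i, x_j)` is an associated prime of `R/J³`; (b) for every odd `r` and every
set of `r` vertices inducing an odd cycle in `G`, the corresponding prime
belongs to `Ass(R/J³)`. -/
theorem edges_and_odd_cycles_in_ass_cube {k : Type} [Field k] {n : ℕ}
    (G : SimpleGraph (Fin n)) :
    (∀ i j : Fin n, G.Adj i j →
      Ideal.span {(MvPolynomial.X i : MvPolynomial (Fin n) k), MvPolynomial.X j} ∈
        associatedPrimes (MvPolynomial (Fin n) k)
          (MvPolynomial (Fin n) k ⧸ (coverIdeal k G) ^ 3)) ∧
    (∀ S : Finset (Fin n), Odd S.card → 3 ≤ S.card →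
      Nonempty (G.induce (S : Set (Fin n)) ≃g SimpleGraph.cycleGraph S.card) →
      Ideal.span ((fun i => (MvPolynomial.X i : MvPolynomial (Fin n) k)) '' (S : Set (Fin n))) ∈
        associatedPrimes (MvPolynomial (Fin n) k)
          (MvPolynomial (Fin n) k ⧸ (coverIdeal k G) ^ 3)) := by
  refine ⟨fun i j h => span_X_pair_mem_associatedPrimes_coverIdeal_cube h,
    fun S hodd h3 he => ?_⟩
  obtain ⟨l, hl⟩ := hodd
  rw [hl] at he
  obtain ⟨e⟩ := he
  set φ := (Embedding.induce (S : Set (Fin n))).comp e.symm.toEmbedding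
  have hrange : Set.range φ = S := by
    ext x
    simp [φ]
  simpa [hrange] using span_X_range_mem_associatedPrimes_coverIdeal_cube_of_oddCycle (k := k)
    (by omega) φ
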